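/- arXiv:1301.4736 — 3 statements merged into one kernel-verified Lean document; each statement's English description precedes it below -/
import Mathlib

section
/- Let q : X → Y be a Lipschitz map between metric spaces with bounded geometry such that every fiber q⁻¹(y) has cardinality at most K. If X satisfies the Sobolev-type inequality |f(x₀)| ≤ C (∑_{x,x' ∈ X, d(x,x') ≤ R} |f(x') − f(x)|²)^{1/2} for all finitely supported f : X → ℂ (for some constants C, R > 0), then Y satisfies the analogous inequality at the point q(x₀): there exist C', R' > 0 such that |f(q(x₀))| ≤ C' (∑_{y,y' ∈ Y, d(y,y') ≤ R'} |f(y) − f(y')|²)^{1/2} for all finitely supported f : Y → ℂ. -/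
/-- A metric space has bounded geometry if balls of each radius have uniformly
bounded (finite) cardinality. -/
def BoundedGeometry (X : Type*) [MetricSpace X] : Prop :=
  ∀ R : ℝ, ∃ N : ℕ, ∀ x : X,
    {y : X | dist y x ≤ R}.Finite ∧ Nat.card {y : X | dist y x ≤ R} ≤ N

private lemma card_toFinset_le {α : Type*} {s : Set α} (hs : s.Finite) {K : ℕ}
    (h : Nat.card s ≤ K) : hs.toFinset.card ≤ K := by
  rwa [← Set.ncard_eq_toFinset_card s hs, ← Nat.card_coe_set_eq]

/-- Transfer of the Sobolev-type inequality characterizing transience along a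
Lipschitz map with uniformly finite fibers. -/
theorem sobolev_inequality_transfer
    (X Y : Type*) [MetricSpace X] [MetricSpace Y]
    (hX : BoundedGeometry X) (hY : BoundedGeometry Y)
    (q : X → Y) (L : NNReal) (hq : LipschitzWith L q)
    (K : ℕ) (hfib : ∀ y : Y, (q ⁻¹' {y}).Finite ∧ Nat.card (q ⁻¹' {y}) ≤ K)
    (x₀ : X) (C R : ℝ) (hC : 0 < C) (hR : 0 < R)
    (hSob : ∀ f : X → ℂ, (Function.support f).Finite →
      ‖f x₀‖ ≤ C * Real.sqrt (∑' p : X × X,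
        if dist p.1 p.2 ≤ R then ‖f p.2 - f p.1‖ ^ 2 else 0)) :
    ∃ C' R' : ℝ, 0 < C' ∧ 0 < R' ∧
      ∀ f : Y → ℂ, (Function.support f).Finite →
        ‖f (q x₀)‖ ≤ C' * Real.sqrt (∑' p : Y × Y,
          if dist p.1 p.2 ≤ R' then ‖f p.2 - f p.1‖ ^ 2 else 0) := by
  classical
  set R' : ℝ := L * R + 1 with hR'def
  have hR' : 0 < R' := by positivity
  refine ⟨C * (K + 1), R', by positivity, hR', ?_⟩
  intro f hf
  set g : X → ℂ := fun x => f (q x) with hgdef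
  -- g has finite support
  have hsupp : (Function.support g).Finite := by
    have hsub : Function.support g ⊆ q ⁻¹' (Function.support f) := fun x hx => hx
    refine Set.Finite.subset ?_ hsub
    have heq : q ⁻¹' (Function.support f) = ⋃ y ∈ Function.support f, q ⁻¹' {y} := by
      ext x; simp
    rw [heq]
    exact hf.biUnion fun y _ => (hfib y).1
  -- the summands
  set FX : X × X → ℝ := fun p => if dist p.1 p.2 ≤ R then ‖g p.2 - g p.1‖ ^ 2 else 0 with hFX
  set FY : Y × Y → ℝ := fun p => if dist p.1 p.2 ≤ R' then ‖f p.2 - f p.1‖ ^ 2 else 0 with hFY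
  have hFXnn : ∀ p, 0 ≤ FX p := by
    intro p; simp only [hFX]; positivity
  have hFYnn : ∀ p, 0 ≤ FY p := by
    intro p; simp only [hFY]; positivity
  -- finite support of FX
  have hBX : ({z : X | ∃ x ∈ Function.support g, dist z x ≤ R}).Finite := by
    have : {z : X | ∃ x ∈ Function.support g, dist z x ≤ R}
        = ⋃ x ∈ Function.support g, {z : X | dist z x ≤ R} := by
      ext z; simp
    rw [this]
    exact hsupp.biUnion fun x _ => ((hX R).choose_spec x).1
  have hsuppFX : Function.support FX ⊆
      {z : X | ∃ x ∈ Function.support g, dist z x ≤ R} ×ˢ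
        {z : X | ∃ x ∈ Function.support g, dist z x ≤ R} := by
    rintro ⟨a, b⟩ hp
    simp only [Function.mem_support, hFX] at hp
    by_cases hd : dist a b ≤ R
    · rw [if_pos hd] at hp
      have hne : g a ≠ g b := by
        intro h; apply hp; rw [h]; simp
      have hor : a ∈ Function.support g ∨ b ∈ Function.support g := by
        by_contra hcon
        push_neg at hcon
        obtain ⟨h1, h2⟩ := hcon
        simp only [Function.mem_support, not_not] at h1 h2
        exact hne (h1.trans h2.symm)
      rcases hor with h | h
      · exact ⟨⟨a, h, by simpa using hR.le⟩, ⟨a, h, by rwa [dist_comm]⟩⟩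
      · exact ⟨⟨b, h, hd⟩, ⟨b, h, by simpa using hR.le⟩⟩
    · rw [if_neg hd] at hp; exact absurd rfl hp
  have hfinFX : (Function.support FX).Finite :=
    Set.Finite.subset (hBX.prod hBX) hsuppFX
  -- finite support of FY
  have hBY : ({z : Y | ∃ y ∈ Function.support f, dist z y ≤ R'}).Finite := by
    have : {z : Y | ∃ y ∈ Function.support f, dist z y ≤ R'}
        = ⋃ y ∈ Function.support f, {z : Y | dist z y ≤ R'} := by
      ext z; simp
    rw [this]
    exact hf.biUnion fun y _ => ((hY R').choose_spec y).1
  have hsuppFY : Function.support FY ⊆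
      {z : Y | ∃ y ∈ Function.support f, dist z y ≤ R'} ×ˢ
        {z : Y | ∃ y ∈ Function.support f, dist z y ≤ R'} := by
    rintro ⟨a, b⟩ hp
    simp only [Function.mem_support, hFY] at hp
    by_cases hd : dist a b ≤ R'
    · rw [if_pos hd] at hp
      have hne : f a ≠ f b := by
        intro h; apply hp; rw [h]; simp
      have hor : a ∈ Function.support f ∨ b ∈ Function.support f := by
        by_contra hcon
        push_neg at hcon
        obtain ⟨h1, h2⟩ := hcon
        simp only [Function.mem_support, not_not] at h1 h2
        exact hne (h1.trans h2.symm)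
      rcases hor with h | h
      · exact ⟨⟨a, h, by simpa using hR'.le⟩, ⟨a, h, by rwa [dist_comm]⟩⟩
      · exact ⟨⟨b, h, hd⟩, ⟨b, h, by simpa using hR'.le⟩⟩
    · rw [if_neg hd] at hp; exact absurd rfl hp
  have hfinFY : (Function.support FY).Finite :=
    Set.Finite.subset (hBY.prod hBY) hsuppFY
  have hsumFY : Summable FY :=
    summable_of_ne_finset_zero (s := hfinFY.toFinset) (by
      intro p hp
      by_contra h
      exact hp (hfinFY.mem_toFinset.2 h))
  -- pointwise bound: FX p ≤ FY (q p.1, q p.2)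
  set φ : X × X → Y × Y := fun p => (q p.1, q p.2) with hφ
  have hpt : ∀ p : X × X, FX p ≤ FY (φ p) := by
    intro ⟨a, b⟩
    simp only [hFX, hFY, hφ]
    by_cases hd : dist a b ≤ R
    · have hdy : dist (q a) (q b) ≤ R' := by
        calc dist (q a) (q b) ≤ L * dist a b := hq.dist_le_mul a b
          _ ≤ L * R := by
              apply mul_le_mul_of_nonneg_left hd (by positivity)
          _ ≤ R' := by rw [hR'def]; linarith
      rw [if_pos hd, if_pos hdy]
    · rw [if_neg hd]
      positivity
  -- the key sum comparison
  have hcard : ∀ r : Y × Y, (hfinFX.toFinset.filter fun p => φ p = r).card ≤ (K + 1) ^ 2 := by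
    intro ⟨y₁, y₂⟩
    have hsub : (hfinFX.toFinset.filter fun p => φ p = (y₁, y₂)) ⊆
        (hfib y₁).1.toFinset ×ˢ (hfib y₂).1.toFinset := by
      intro ⟨a, b⟩ hp
      rw [Finset.mem_filter] at hp
      have := hp.2
      simp only [hφ, Prod.mk.injEq] at this
      rw [Finset.mem_product]
      constructor
      · rw [Set.Finite.mem_toFinset]; exact this.1
      · rw [Set.Finite.mem_toFinset]; exact this.2
    calc (hfinFX.toFinset.filter fun p => φ p = (y₁, y₂)).card
        ≤ ((hfib y₁).1.toFinset ×ˢ (hfib y₂).1.toFinset).card := Finset.card_le_card hsub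
      _ = (hfib y₁).1.toFinset.card * (hfib y₂).1.toFinset.card := Finset.card_product _ _
      _ ≤ K * K := Nat.mul_le_mul (card_toFinset_le _ (hfib y₁).2) (card_toFinset_le _ (hfib y₂).2)
      _ ≤ (K + 1) ^ 2 := by nlinarith
  have hSX : (∑' p : X × X, FX p) ≤ ((K : ℝ) + 1) ^ 2 * ∑' p : Y × Y, FY p := by
    rw [tsum_eq_sum (s := hfinFX.toFinset) (by
      intro p hp
      by_contra h
      exact hp (hfinFX.mem_toFinset.2 h))]
    calc ∑ p ∈ hfinFX.toFinset, FX p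
        ≤ ∑ p ∈ hfinFX.toFinset, FY (φ p) := Finset.sum_le_sum fun p _ => hpt p
      _ = ∑ r ∈ hfinFX.toFinset.image φ,
            (hfinFX.toFinset.filter fun p => φ p = r).card • FY r := Finset.sum_comp FY φ
      _ ≤ ∑ r ∈ hfinFX.toFinset.image φ, ((K : ℝ) + 1) ^ 2 * FY r := by
          apply Finset.sum_le_sum
          intro r _
          rw [nsmul_eq_mul]
          apply mul_le_mul_of_nonneg_right _ (hFYnn r)
          calc ((hfinFX.toFinset.filter fun p => φ p = r).card : ℝ)
              ≤ ((K + 1) ^ 2 : ℕ) := by exact_mod_cast hcard r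
            _ = ((K : ℝ) + 1) ^ 2 := by push_cast; ring
      _ = ((K : ℝ) + 1) ^ 2 * ∑ r ∈ hfinFX.toFinset.image φ, FY r := by
          rw [Finset.mul_sum]
      _ ≤ ((K : ℝ) + 1) ^ 2 * ∑' p : Y × Y, FY p := by
          apply mul_le_mul_of_nonneg_left _ (by positivity)
          exact Summable.sum_le_tsum _ (fun p _ => hFYnn p) hsumFY
  -- conclude
  have hX' := hSob g hsupp
  have h0 : ‖f (q x₀)‖ = ‖g x₀‖ := rfl
  rw [h0]
  refine le_trans hX' ?_
  have hSYnn : 0 ≤ ∑' p : Y × Y, FY p := tsum_nonneg hFYnn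
  have hsqrt : Real.sqrt (∑' p : X × X, FX p) ≤ ((K : ℝ) + 1) * Real.sqrt (∑' p : Y × Y, FY p) := by
    calc Real.sqrt (∑' p : X × X, FX p)
        ≤ Real.sqrt (((K : ℝ) + 1) ^ 2 * ∑' p : Y × Y, FY p) := Real.sqrt_le_sqrt hSX
      _ = ((K : ℝ) + 1) * Real.sqrt (∑' p : Y × Y, FY p) := by
          rw [Real.sqrt_mul (by positivity), Real.sqrt_sq (by positivity)]
  calc C * Real.sqrt (∑' p : X × X, FX p)
      ≤ C * (((K : ℝ) + 1) * Real.sqrt (∑' p : Y × Y, FY p)) :=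
        mul_le_mul_of_nonneg_left hsqrt hC.le
    _ = C * ((K : ℝ) + 1) * Real.sqrt (∑' p : Y × Y, FY p) := by ring
end

section
/- Let X, Y be metric spaces and q : X → Y a map such that d_Y(q(x), q(x')) ≤ φ₊(d_X(x,x')) for some increasing function φ₊ : ℝ≥0 → ℝ≥0 and such that every fiber q⁻¹(y) has cardinality at most K. Let F be a finite metric space with |F| = K. Then W(X) is isomorphic to a subgroup of W(Y × F), where Y × F carries the distance d((y,f),(y',f')) = d_Y(y,y') + d_F(f,f'). -/
/-- The wobbling group of a metric space: the subgroup of permutations with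
bounded displacement. -/
def wobblingGroup (Z : Type*) [PseudoMetricSpace Z] : Subgroup (Equiv.Perm Z) where
  carrier := {g : Equiv.Perm Z | ∃ C : ℝ, ∀ z, dist (g z) z ≤ C}
  one_mem' := ⟨0, by simp⟩
  mul_mem' := by
    rintro g h ⟨Cg, hCg⟩ ⟨Ch, hCh⟩
    exact ⟨Cg + Ch, fun z => (dist_triangle _ (h z) z).trans
      (add_le_add (hCg (h z)) (hCh z))⟩
  inv_mem' := by
    rintro g ⟨C, hC⟩
    exact ⟨C, fun z => by simpa [dist_comm] using hC (g⁻¹ z)⟩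

/-- If `q : X → Y` has displacement controlled by an increasing function and fibers
of cardinality at most `K = |F|`, then `W(X)` embeds into `W(Y × F)`. -/
theorem wobbling_embeds_in_product
    (X Y : Type*) [MetricSpace X] [MetricSpace Y]
    (q : X → Y) (φ : ℝ → ℝ) (hφ : Monotone φ)
    (hq : ∀ x x' : X, dist (q x) (q x') ≤ φ (dist x x'))
    (K : ℕ) (hfib : ∀ y : Y, (q ⁻¹' {y}).Finite ∧ Nat.card (q ⁻¹' {y}) ≤ K)
    (F : Type*) [MetricSpace F] [Fintype F] (hF : Fintype.card F = K) :
    ∃ ψ : wobblingGroup X →* wobblingGroup (Y × F), Function.Injective ψ := by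
  classical
  -- choose injections of fibers into F
  have hj : ∀ y : Y, ∃ j : (q ⁻¹' {y}) → F, Function.Injective j := by
    intro y
    haveI : Fintype (q ⁻¹' {y}) := (hfib y).1.fintype
    have hcard : Fintype.card (q ⁻¹' {y}) ≤ Fintype.card F := by
      rw [hF]
      simpa [Nat.card_eq_fintype_card] using (hfib y).2
    obtain ⟨emb⟩ := Function.Embedding.nonempty_iff_card_le.mpr hcard
    exact ⟨emb, emb.injective⟩
  choose j hjinj using hj
  set f : X → F := fun x => j (q x) ⟨x, rfl⟩ with hf_def
  have hf_eq : ∀ (x : X) (y : Y) (h : q x = y), f x = j y ⟨x, h⟩ := by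
    intro x y h; subst h; rfl
  set ι : X → Y × F := fun x => (q x, f x) with hι_def
  have hι : Function.Injective ι := by
    intro x x' h
    have h1 : q x = q x' := congrArg Prod.fst h
    have h2 : f x = f x' := congrArg Prod.snd h
    rw [hf_eq x (q x) rfl, hf_eq x' (q x) h1.symm] at h2
    have := hjinj (q x) h2
    exact congrArg Subtype.val this
  set e : X ≃ {z : Y × F // z ∈ Set.range ι} := Equiv.ofInjective ι hι with he_def
  have he : ∀ x : X, (e x : Y × F) = ι x := fun x => rfl
  -- bound on distances in F
  obtain ⟨D, hD⟩ := Metric.isBounded_iff.mp (Set.finite_univ (α := F)).isBounded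
  -- the homomorphism
  have hmem : ∀ g : wobblingGroup X,
      (g : Equiv.Perm X).extendDomain e ∈ wobblingGroup (Y × F) := by
    rintro ⟨g, C, hC⟩
    refine ⟨max (max (φ C) D) 0, fun z => ?_⟩
    by_cases hz : z ∈ Set.range ι
    · obtain ⟨x, rfl⟩ := hz
      have : g.extendDomain e (ι x) = ι (g x) := by
        have := Equiv.Perm.extendDomain_apply_image g e x
        rwa [he, he] at this
      rw [this]
      have h1 : dist (q (g x)) (q x) ≤ φ C := (hq _ _).trans (hφ (hC x))
      have h2 : dist (f (g x)) (f x) ≤ D := hD (Set.mem_univ _) (Set.mem_univ _)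
      calc dist (ι (g x)) (ι x) = max (dist (q (g x)) (q x)) (dist (f (g x)) (f x)) :=
            Prod.dist_eq
        _ ≤ max (φ C) D := max_le_max h1 h2
        _ ≤ max (max (φ C) D) 0 := le_max_left _ _
    · rw [Equiv.Perm.extendDomain_apply_not_subtype g e hz]
      simp
  refine ⟨{
    toFun := fun g => ⟨(g : Equiv.Perm X).extendDomain e, hmem g⟩
    map_one' := Subtype.ext (Equiv.Perm.extendDomain_one e)
    map_mul' := fun g h => Subtype.ext
      ((Equiv.Perm.extendDomain_mul e (g : Equiv.Perm X) (h : Equiv.Perm X)).symm) }, ?_⟩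
  intro g h hgh
  have hgh' : (g : Equiv.Perm X).extendDomain e = (h : Equiv.Perm X).extendDomain e := by
    simpa [Subtype.ext_iff] using hgh
  ext x
  have h1 := Equiv.Perm.extendDomain_apply_image (g : Equiv.Perm X) e x
  have h2 := Equiv.Perm.extendDomain_apply_image (h : Equiv.Perm X) e x
  rw [hgh'] at h1
  have : ι ((g : Equiv.Perm X) x) = ι ((h : Equiv.Perm X) x) := by
    rw [he, he] at h1 h2
    rw [← h1, ← h2]
  exact hι this
end

section
/- Let a : X → [0,1] be a finitely supported function on a countable set X with a(x₀) = 1 for some fixed x₀ ∈ X, and let g be a bijection of X. Define ξ : P_f(X) → ℝ by ξ(B) = ∏_{x ∈ B} a(x) (with ξ(∅) = 1), and let g act on P_f(X) by taking images. Then ξ ∈ ℓ²(P_f(X)), ⟨ξ, ξ⟩ = ∏_{x ∈ X} (1 + a(x)²), ⟨g·ξ, ξ⟩ = ∏_{x ∈ X} (1 + a(x)a(g x)), and log(⟨ξ,ξ⟩/⟨g·ξ,ξ⟩) ≤ (1/2) ∑_{x ∈ X} |a(x) − a(gx)|². -/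
private lemma tsum_prod_of_support_subset {X : Type*} [DecidableEq X]
    (b : X → ℝ) (T : Finset X) (hb : ∀ x, b x ≠ 0 → x ∈ T) :
    Summable (fun B : Finset X => ∏ x ∈ B, b x) ∧
    ∑' B : Finset X, ∏ x ∈ B, b x = ∏ x ∈ T, (1 + b x) := by
  have hvanish : ∀ B : Finset X, B ∉ T.powerset → ∏ x ∈ B, b x = 0 := by
    intro B hB
    rw [Finset.mem_powerset] at hB
    obtain ⟨x, hxB, hxT⟩ := Finset.not_subset.mp hB
    exact Finset.prod_eq_zero hxB (by by_contra h; exact hxT (hb x h))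
  refine ⟨summable_of_ne_finset_zero hvanish, ?_⟩
  rw [tsum_eq_sum hvanish]
  have h := Finset.prod_add b (fun _ => (1:ℝ)) T
  simp only [Finset.prod_const_one, mul_one] at h
  rw [← h]
  exact Finset.prod_congr rfl fun x _ => by ring

private lemma log_pair_estimate (a b : ℝ) (ha : 0 ≤ a) (hb : 0 ≤ b) :
    Real.log (1 + a ^ 2) + Real.log (1 + b ^ 2) - 2 * Real.log (1 + a * b)
      ≤ (a - b) ^ 2 := by
  have hab : (0:ℝ) ≤ a * b := mul_nonneg ha hb
  set c : ℝ := (1 + a * b) ^ 2 with hc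
  set d : ℝ := (a - b) ^ 2 with hd
  have hc1 : (1:ℝ) ≤ c := by nlinarith
  have hc0 : (0:ℝ) < c := lt_of_lt_of_le one_pos hc1
  have hd0 : (0:ℝ) ≤ d := sq_nonneg _
  have h1 : (1 + a ^ 2) * (1 + b ^ 2) = c + d := by rw [hc, hd]; ring
  have hpa : (0:ℝ) < 1 + a ^ 2 := by positivity
  have hpb : (0:ℝ) < 1 + b ^ 2 := by positivity
  have hlog : Real.log (1 + a ^ 2) + Real.log (1 + b ^ 2) = Real.log (c + d) := by
    rw [← Real.log_mul hpa.ne' hpb.ne', h1]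
  have hlog2 : 2 * Real.log (1 + a * b) = Real.log c := by
    rw [hc, Real.log_pow]; push_cast; ring
  rw [hlog, hlog2]
  have h2 : Real.log (c + d) - Real.log c = Real.log ((c + d) / c) := by
    rw [Real.log_div (by positivity) hc0.ne']
  rw [h2]
  have h3 : Real.log ((c + d) / c) ≤ (c + d) / c - 1 :=
    Real.log_le_sub_one_of_pos (by positivity)
  have h4 : (c + d) / c - 1 = d / c := by field_simp; ring
  have h5 : d / c ≤ d := by
    rw [div_le_iff₀ hc0]; nlinarith
  linarith

/-- Properties of the vector `ξ(B) = ∏_{x∈B} a(x)` on `ℓ²(P_f(X))`: its norm,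
its pairing with its translate by a wobbling `g`, and the key almost-invariance
estimate. -/
theorem xi_product_vector_estimates
    (X : Type*) [Countable X] [DecidableEq X]
    (a : X → ℝ) (ha : ∀ x, a x ∈ Set.Icc (0 : ℝ) 1)
    (hsupp : (Function.support a).Finite)
    (x₀ : X) (ha₀ : a x₀ = 1)
    (g : Equiv.Perm X)
    (ξ : Finset X → ℝ) (hξ : ξ = fun B => ∏ x ∈ B, a x) :
    Summable (fun B : Finset X => (ξ B) ^ 2)
    ∧ (∑' B : Finset X, (ξ B) ^ 2) = ∏ᶠ x : X, (1 + (a x) ^ 2)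
    ∧ (∑' B : Finset X, ξ (B.image g.symm) * ξ B) = ∏ᶠ x : X, (1 + a x * a (g x))
    ∧ Real.log ((∑' B : Finset X, (ξ B) ^ 2) /
        (∑' B : Finset X, ξ (B.image g.symm) * ξ B))
      ≤ (1 / 2) * ∑ᶠ x : X, (a x - a (g x)) ^ 2 := by
  have ha0 : ∀ x, 0 ≤ a x := fun x => (ha x).1
  set S : Finset X := hsupp.toFinset with hS
  have hmemS : ∀ x, a x ≠ 0 → x ∈ S := fun x hx => hsupp.mem_toFinset.mpr hx
  set T : Finset X := S ∪ S.image g ∪ S.image g.symm with hT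
  have hST : S ⊆ T := fun x hx => by
    simp only [hT, Finset.mem_union]; tauto
  have hSgT : ∀ x, a (g x) ≠ 0 → x ∈ T := by
    intro x hx
    have : x ∈ S.image g.symm := by
      refine Finset.mem_image.mpr ⟨g x, hmemS _ hx, by simp⟩
    simp only [hT, Finset.mem_union]; tauto
  -- ξ B ^ 2 as a product
  have hξ2 : ∀ B : Finset X, (ξ B) ^ 2 = ∏ x ∈ B, a x ^ 2 := by
    intro B; rw [hξ, ← Finset.prod_pow]
  -- the cross term as a product
  have hξc : ∀ B : Finset X, ξ (B.image g.symm) * ξ B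
      = ∏ x ∈ B, (a (g.symm x) * a x) := by
    intro B
    rw [hξ]
    simp only
    rw [Finset.prod_image (fun x _ y _ h => g.symm.injective h), ← Finset.prod_mul_distrib]
  -- first tsum
  obtain ⟨hsum1, heq1⟩ := tsum_prod_of_support_subset (fun x => a x ^ 2) T
    (fun x hx => hST (hmemS x (fun h => hx (by simp [h]))))
  -- second tsum
  obtain ⟨hsum2, heq2⟩ := tsum_prod_of_support_subset (fun x => a (g.symm x) * a x) T
    (fun x hx => hST (hmemS x (fun h => hx (by simp [h]))))
  have hsummable : Summable (fun B : Finset X => (ξ B) ^ 2) := by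
    simpa only [← hξ2] using hsum1
  have htsum1 : (∑' B : Finset X, (ξ B) ^ 2) = ∏ x ∈ T, (1 + a x ^ 2) := by
    simp_rw [hξ2]; exact heq1
  have htsum2 : (∑' B : Finset X, ξ (B.image g.symm) * ξ B)
      = ∏ x ∈ T, (1 + a (g.symm x) * a x) := by
    simp_rw [hξc]; exact heq2
  -- finprod identifications
  have hfp1 : ∏ᶠ x : X, (1 + (a x) ^ 2) = ∏ x ∈ T, (1 + a x ^ 2) := by
    refine finprod_eq_prod_of_mulSupport_subset _ ?_
    intro x hx
    have : a x ≠ 0 := by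
      intro h; apply hx; simp [Function.mulSupport, h]
    exact hST (hmemS x this)
  have hfp2 : ∏ᶠ x : X, (1 + a x * a (g x)) = ∏ x ∈ T, (1 + a (g.symm x) * a x) := by
    have hcomp : ∏ᶠ x : X, (1 + a (g.symm x) * a x)
        = ∏ᶠ x : X, (1 + a x * a (g x)) := by
      have := finprod_comp_equiv g (f := fun x => 1 + a (g.symm x) * a x)
      simpa using this.symm
    rw [← hcomp]
    refine finprod_eq_prod_of_mulSupport_subset _ ?_
    intro x hx
    have : a x ≠ 0 := by
      intro h; apply hx; simp [Function.mulSupport, h]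
    exact hST (hmemS x this)
  refine ⟨hsummable, by rw [htsum1, hfp1], by rw [htsum2, hfp2], ?_⟩
  -- the estimate
  rw [htsum1, htsum2]
  set P : ℝ := ∏ x ∈ T, (1 + a x ^ 2) with hP
  set Q : ℝ := ∏ x ∈ T, (1 + a (g.symm x) * a x) with hQ
  have hP0 : 0 < P := Finset.prod_pos fun x _ => by positivity
  have hQ0 : 0 < Q := Finset.prod_pos fun x _ => by
    have := mul_nonneg (ha0 (g.symm x)) (ha0 x); positivity
  set F : X → ℝ := fun x => Real.log (1 + a x ^ 2) with hF
  set G : X → ℝ := fun x => Real.log (1 + a x * a (g x)) with hG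
  have hFsupp : ∀ x, F x ≠ 0 → a x ≠ 0 := by
    intro x hx h
    apply hx
    simp [hF, h]
  have hGsupp : ∀ x, G x ≠ 0 → a x ≠ 0 := by
    intro x hx h
    apply hx
    simp [hG, h]
  have hlogP : Real.log P = ∑ x ∈ T, F x := by
    rw [hP, Real.log_prod (s := T) (f := fun x => 1 + a x ^ 2) fun x _ => by positivity]
  have hlogQ : Real.log Q = ∑ x ∈ T, G x := by
    rw [hQ, Real.log_prod (s := T) (f := fun x => 1 + a (g.symm x) * a x) fun x _ => by
      have := mul_nonneg (ha0 (g.symm x)) (ha0 x); positivity]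
    -- ∑_{x∈T} log(1 + a(g.symm x) * a x) = ∑_{x∈T} G x
    have h1 : ∀ x : X, Real.log (1 + a (g.symm x) * a x) = G (g.symm x) := by
      intro x; simp [hG]
    simp_rw [h1]
    have h2 : ∑ x ∈ T, G (g.symm x) = ∑ᶠ x : X, G (g.symm x) := by
      symm
      refine finsum_eq_sum_of_support_subset _ ?_
      intro x hx
      have : a x ≠ 0 := by
        have := hGsupp (g.symm x) hx
        intro h
        apply hx
        simp [hG, h]
      exact hST (hmemS x this)
    have h3 : ∑ᶠ x : X, G (g.symm x) = ∑ᶠ x : X, G x := finsum_comp_equiv g.symm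
    have h4 : ∑ᶠ x : X, G x = ∑ x ∈ T, G x := by
      refine finsum_eq_sum_of_support_subset _ ?_
      intro x hx
      exact hST (hmemS x (hGsupp x hx))
    rw [h2, h3, h4]
  -- log P also equals sum of F ∘ g over T
  have hlogP' : Real.log P = ∑ x ∈ T, F (g x) := by
    rw [hlogP]
    have h1 : ∑ x ∈ T, F x = ∑ᶠ x : X, F x := by
      symm
      refine finsum_eq_sum_of_support_subset _ ?_
      intro x hx
      exact hST (hmemS x (hFsupp x hx))
    have h2 : ∑ᶠ x : X, F x = ∑ᶠ x : X, F (g x) := (finsum_comp_equiv g).symm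
    have h3 : ∑ᶠ x : X, F (g x) = ∑ x ∈ T, F (g x) := by
      refine finsum_eq_sum_of_support_subset _ ?_
      intro x hx
      exact hSgT x (hFsupp (g x) hx)
    rw [h1, h2, h3]
  have hRHS : ∑ᶠ x : X, (a x - a (g x)) ^ 2 = ∑ x ∈ T, (a x - a (g x)) ^ 2 := by
    refine finsum_eq_sum_of_support_subset _ ?_
    intro x hx
    have hne : a x ≠ a (g x) := by
      intro h
      apply hx
      simp only [Function.support, Set.mem_setOf_eq, not_not] at *
      rw [h]; ring
    by_cases h : a x = 0
    · exact hSgT x (fun h' => hne (by rw [h, h']))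
    · exact hST (hmemS x h)
  rw [Real.log_div hP0.ne' hQ0.ne', hRHS]
  have key : ∑ x ∈ T, F x + ∑ x ∈ T, F (g x) - 2 * ∑ x ∈ T, G x
      ≤ ∑ x ∈ T, (a x - a (g x)) ^ 2 := by
    have := Finset.sum_le_sum (s := T)
      (f := fun x => F x + F (g x) - 2 * G x)
      (g := fun x => (a x - a (g x)) ^ 2)
      (fun x _ => log_pair_estimate (a x) (a (g x)) (ha0 x) (ha0 (g x)))
    calc ∑ x ∈ T, F x + ∑ x ∈ T, F (g x) - 2 * ∑ x ∈ T, G x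
        = ∑ x ∈ T, (F x + F (g x) - 2 * G x) := by
          rw [Finset.sum_sub_distrib, Finset.sum_add_distrib, Finset.mul_sum]
      _ ≤ _ := this
  have : 2 * (Real.log P - Real.log Q) ≤ ∑ x ∈ T, (a x - a (g x)) ^ 2 := by
    rw [two_mul]
    nth_rewrite 1 [hlogP]
    nth_rewrite 1 [hlogP']
    rw [hlogQ]
    linarith [key]
  linarith
end
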